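/- arXiv:2208.10749 — 4 statements merged into one kernel-verified Lean document; each statement's English description precedes it below -/
import Mathlib

section
/- Let G be a weakly closed graph on {1,...,n}, let T ⊆ {1,...,n}, and let C be the vertex set of a connected component of the induced subgraph G_T. If m, m' ∈ C with m < l < m' and {m,m'} ∈ E(G), then {m,l} ∈ E(G) or {l,m'} ∈ E(G). Consequently, if l ∈ T and l lies strictly between two vertices of C, then l ∈ C. In other words, every connected component of an induced subgraph of a weakly closed graph has vertex set equal to the intersection of T with an interval: for any connected component C of G_T and any l ∈ T with min(C) < l < max(C), we have l ∈ C. -/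
def WeaklyClosed {n : ℕ} (G : SimpleGraph (Fin n)) : Prop :=
  ∀ i j k : Fin n, i < j → j < k → G.Adj i k → G.Adj i j ∨ G.Adj j k

lemma weaklyClosed_aux {n : ℕ} (G : SimpleGraph (Fin n))
    (hwc : WeaklyClosed G) (T : Set (Fin n)) (l : Fin n) (hl : l ∈ T) :
    ∀ (x y : T), (G.induce T).Walk x y → (x : Fin n) < l → l < (y : Fin n) →
      (G.induce T).Reachable x ⟨l, hl⟩ := by
  intro x y w
  induction w with
  | nil => intro h1 h2; exact absurd (h1.trans h2) (lt_irrefl _)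
  | @cons u v y hadj w ih =>
    intro h1 h2
    rcases lt_trichotomy (v : Fin n) l with hv | hv | hv
    · exact ((SimpleGraph.Adj.reachable hadj)).trans (ih hv h2)
    · have : v = ⟨l, hl⟩ := Subtype.ext hv
      exact (this ▸ hadj).reachable
    · have hG : G.Adj u v := hadj
      rcases hwc u l v h1 hv hG with h | h
      · have : (G.induce T).Adj u ⟨l, hl⟩ := h
        exact this.reachable
      · have h1' : (G.induce T).Adj ⟨l, hl⟩ v := h
        exact hadj.reachable.trans h1'.symm.reachable

/-- Let `G` be weakly closed and `T ⊆ {1,...,n}`. If `m < l < m'` and `{m,m'} ∈ E(G)`,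
then `{m,l} ∈ E(G)` or `{l,m'} ∈ E(G)`; consequently every connected component of the
induced subgraph `G_T` has vertex set equal to the intersection of `T` with an
interval: if `a, b` lie in the same component of `G_T` and `l ∈ T` with `a < l < b`,
then `l` lies in that component as well. -/
theorem weaklyClosed_component_interval {n : ℕ} (G : SimpleGraph (Fin n))
    (hwc : WeaklyClosed G) (T : Set (Fin n)) :
    (∀ m l m' : Fin n, m < l → l < m' → G.Adj m m' → G.Adj m l ∨ G.Adj l m') ∧
    (∀ (a b l : Fin n) (ha : a ∈ T) (hb : b ∈ T) (hl : l ∈ T),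
      a < l → l < b →
      (G.induce T).Reachable ⟨a, ha⟩ ⟨b, hb⟩ →
      (G.induce T).Reachable ⟨a, ha⟩ ⟨l, hl⟩) := by
  refine ⟨fun m l m' h1 h2 h3 => hwc m l m' h1 h2 h3, ?_⟩
  intro a b l ha hb hl h1 h2 hr
  obtain ⟨w⟩ := hr
  exact weaklyClosed_aux G hwc T l hl _ _ w h1 h2
end

section
/- Let G be a weakly closed graph on {1,...,n} and let C be the vertex set of a connected component of G (i.e., of the induced subgraph on all of {1,...,n}). Then C is an interval: if a, b ∈ C and a ≤ l ≤ b, then l ∈ C. -/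
/-- Induction along the walk: if its first edge `uv` jumps over `l`, weak closedness joins `l`
to `u` or to `v`; otherwise `l` lies between `v` and the end of the rest of the walk. -/
theorem WeaklyClosed.reachable_of_walk {n : ℕ} {G : SimpleGraph (Fin n)} (hwc : WeaklyClosed G)
    {a b : Fin n} (w : G.Walk a b) {l : Fin n} (hal : a ≤ l) (hlb : l ≤ b) : G.Reachable a l := by
  induction w with
  | nil => rw [le_antisymm hlb hal]
  | @cons u v b huv p ih =>
    rcases hal.eq_or_lt with rfl | hul
    · rfl
    rcases lt_or_ge l v with hlv | hvl
    · rcases hwc u l v hul hlv huv with hul' | hlv'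
      · exact hul'.reachable
      · exact huv.reachable.trans hlv'.symm.reachable
    · exact huv.reachable.trans (ih hvl hlb)

/-- The vertex set of every connected component of a weakly closed graph is an
interval: if `a` and `b` lie in the same component and `a ≤ l ≤ b`, then `l` lies in
that component. -/
theorem weaklyClosed_component_isInterval {n : ℕ} (G : SimpleGraph (Fin n))
    (hwc : WeaklyClosed G) :
    ∀ a b l : Fin n, G.Reachable a b → a ≤ l → l ≤ b → G.Reachable a l :=
  fun _ _ _ ⟨w⟩ hal hlb => hwc.reachable_of_walk w hal hlb
end

section
/- Let R = K[x₁,...,xₙ,y₁,...,yₙ], f_{ij} = x_i y_j − x_j y_i, and I = (y₁, f_{12}, ..., f_{k-1,k}). If P is a minimal prime of I, then either P = (y₁,...,y_k), or there exists i with 2 ≤ i ≤ k such that P ⊇ (y₁, ..., y_{i-1}, x_{i-1}) and P/(y₁,...,y_{i-1},x_{i-1}) corresponds to a minimal prime of (f_{i,i+1}, ..., f_{k-1,k}); in particular every minimal prime of I contains either x₁ or y₂. -/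
/-!
A prime `P ⊇ I` contains `y₁` and every `f_{j,j+1}`. Walking along the chain, as long as
`y_j ∈ P` the congruence `x_j y_{j+1} ≡ f_{j,j+1} (mod y_j)` forces `x_j ∈ P` or `y_{j+1} ∈ P`; so
either `y₁, …, y_k ∈ P`, or there is a first `i` with `y₁, …, y_{i-1}, x_{i-1} ∈ P`.
Let `J` be the ideal of these variables and `φ` the substitution killing them. For every prime
`Q ≤ P` with `φ(I) ⊆ Q`, the prime `φ⁻¹(Q)` lies between `I` and `J + Q ≤ P`, because
`p - φ(p) ∈ J`; minimality of `P` then gives `P = J + Q`. Take `Q = 0` in the first case and a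
minimal prime of `(f_{i,i+1}, …, f_{k-1,k})` below `P` in the second.
-/

open MvPolynomial

/-- The variable `xᵢ` of `R = K[x₁,...,xₙ,y₁,...,yₙ]`. -/
noncomputable def xx {K : Type*} [Field K] {n : ℕ} (i : Fin n) :
    MvPolynomial (Fin n ⊕ Fin n) K := X (Sum.inl i)

/-- The variable `yᵢ` of `R = K[x₁,...,xₙ,y₁,...,yₙ]`. -/
noncomputable def yy {K : Type*} [Field K] {n : ℕ} (i : Fin n) :
    MvPolynomial (Fin n ⊕ Fin n) K := X (Sum.inr i)

/-- The `2×2` minor `f_{ij} = xᵢyⱼ - xⱼyᵢ` of the generic `2×n` matrix. -/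
noncomputable def fm {K : Type*} [Field K] {n : ℕ} (i j : Fin n) :
    MvPolynomial (Fin n ⊕ Fin n) K := xx i * yy j - xx j * yy i

namespace MvPolynomial

variable {σ R : Type*} [CommRing R] (s : Set σ) [DecidablePred (· ∈ s)]

noncomputable def killVars : MvPolynomial σ R →ₐ[R] MvPolynomial σ R :=
  aeval fun v => if v ∈ s then 0 else X v

@[simp]
theorem killVars_X (v : σ) :
    killVars s (X v : MvPolynomial σ R) = if v ∈ s then 0 else X v := by
  simp [killVars]

theorem sub_killVars_mem_span_X_image (p : MvPolynomial σ R) :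
    p - killVars s p ∈ Ideal.span (X '' s) := by
  induction p using MvPolynomial.induction_on with
  | C a => simp [killVars]
  | add p q hp hq => simpa only [map_add, add_sub_add_comm] using add_mem hp hq
  | mul_X p v hp =>
    rw [map_mul, killVars_X]
    split_ifs with hv
    · simpa using Ideal.mul_mem_left _ p (Ideal.subset_span (Set.mem_image_of_mem X hv))
    · simpa only [← sub_mul] using Ideal.mul_mem_right _ _ hp

theorem comap_killVars_le_span_X_image_sup (Q : Ideal (MvPolynomial σ R)) :
    Q.comap (killVars s) ≤ Ideal.span (X '' s) ⊔ Q := fun p hp => by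
  simpa using Submodule.add_mem_sup (sub_killVars_mem_span_X_image s p) (Ideal.mem_comap.1 hp)

theorem eq_span_X_image_sup_of_mem_minimalPrimes {I P Q : Ideal (MvPolynomial σ R)}
    (hP : P ∈ I.minimalPrimes) (hQ : Q.IsPrime) (hQP : Q ≤ P)
    (hsP : X '' s ⊆ (P : Set (MvPolynomial σ R))) (hIQ : I ≤ Q.comap (killVars s)) :
    P = Ideal.span (X '' s) ⊔ Q := by
  have hle : Ideal.span (X '' s) ⊔ Q ≤ P := sup_le (Ideal.span_le.2 hsP) hQP
  have hcomap := comap_killVars_le_span_X_image_sup s Q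
  exact le_antisymm ((hP.2 ⟨hQ.comap _, hIQ⟩ (hcomap.trans hle)).trans hcomap) hle

end MvPolynomial

theorem Ideal.IsPrime.forall_mem_or_exists_of_sub_mem {R : Type*} [CommRing R] {P : Ideal R}
    (hP : P.IsPrime) {x y : ℕ → R} (hy0 : y 0 ∈ P) {k : ℕ}
    (hf : ∀ j, j + 1 < k → x j * y (j + 1) - x (j + 1) * y j ∈ P) :
    (∀ j < k, y j ∈ P) ∨ ∃ i, 1 ≤ i ∧ i < k ∧ (∀ j < i, y j ∈ P) ∧ x (i - 1) ∈ P := by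
  induction k with
  | zero => exact Or.inl fun _ hj => absurd hj (Nat.not_lt_zero _)
  | succ k ih =>
    rcases ih fun j hj => hf j (by omega) with hy | ⟨i, hi1, hik, hy, hx⟩
    · by_cases hyk : y k ∈ P
      · exact Or.inl fun j hj => (Nat.lt_succ_iff_lt_or_eq.1 hj).elim (hy j) (· ▸ hyk)
      obtain ⟨m, rfl⟩ : ∃ m, k = m + 1 :=
        Nat.exists_eq_add_one.2 <| Nat.pos_of_ne_zero fun hk => hyk (hk ▸ hy0)
      have hxy : x m * y (m + 1) ∈ P :=
        (Submodule.sub_mem_iff_left _ (P.mul_mem_left _ (hy m (by omega)))).1 (hf m (by omega))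
      exact Or.inr ⟨m + 1, by omega, by omega, hy, (hP.mem_or_mem hxy).resolve_right hyk⟩
    · exact Or.inr ⟨i, hi1, by omega, hy, hx⟩

section

variable {K : Type*} [Field K]

theorem eq_span_yy_of_mem_minimalPrimes {k n : ℕ} (hk : 0 < k) (hkn : k ≤ n)
    {P : Ideal (MvPolynomial (Fin n ⊕ Fin n) K)}
    (hP : P ∈ (Ideal.span ({yy (K := K) (n := n) ⟨0, by omega⟩} ∪
      {p | ∃ i : ℕ, ∃ h : i + 1 < k, p = fm ⟨i, by omega⟩ ⟨i + 1, by omega⟩})).minimalPrimes)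
    (hy : ∀ j (h : j < k), yy ⟨j, by omega⟩ ∈ P) :
    P = Ideal.span {p | ∃ i : ℕ, ∃ h : i < k, p = yy ⟨i, by omega⟩} := by
  classical
  let s : Set (Fin n ⊕ Fin n) := {w | ∃ i : ℕ, ∃ h : i < k, w = Sum.inr ⟨i, by omega⟩}
  have hs : X '' s = {p | ∃ i : ℕ, ∃ h : i < k, p = yy (K := K) ⟨i, by omega⟩} := by
    ext p
    simp [s, yy, eq_comm]
  rw [← hs, ← sup_bot_eq (Ideal.span (X '' s))]
  refine eq_span_X_image_sup_of_mem_minimalPrimes s hP Ideal.isPrime_bot bot_le ?_ ?_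
  · rw [hs]
    rintro _ ⟨j, hj, rfl⟩
    exact hy j hj
  · rw [Ideal.span_le]
    rintro _ (rfl | ⟨j, hj, rfl⟩)
    · simp [s, yy, hk]
    · simp [s, fm, xx, yy, hj, (by omega : j < k)]

theorem exists_eq_span_sup_of_mem_minimalPrimes {k n : ℕ} (hkn : k ≤ n)
    {i : ℕ} (hi : 1 ≤ i ∧ i ≤ k - 1) {P : Ideal (MvPolynomial (Fin n ⊕ Fin n) K)}
    (hP : P ∈ (Ideal.span ({yy (K := K) (n := n) ⟨0, by omega⟩} ∪
      {p | ∃ i : ℕ, ∃ h : i + 1 < k, p = fm ⟨i, by omega⟩ ⟨i + 1, by omega⟩})).minimalPrimes)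
    (hy : ∀ j (h : j < i), yy ⟨j, by omega⟩ ∈ P)
    (hx : xx ⟨i - 1, by omega⟩ ∈ P) :
    ∃ Q ∈ (Ideal.span {p : MvPolynomial (Fin n ⊕ Fin n) K |
        ∃ j : ℕ, ∃ h : i ≤ j ∧ j + 1 < k, p = fm ⟨j, by omega⟩ ⟨j + 1, by omega⟩}).minimalPrimes,
      P = Ideal.span ({p | ∃ j : ℕ, ∃ h : j < i, p = yy ⟨j, by omega⟩} ∪
        {xx ⟨i - 1, by omega⟩}) ⊔ Q := by
  classical
  have : P.IsPrime := hP.1.1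
  have hFP : Ideal.span {p : MvPolynomial (Fin n ⊕ Fin n) K |
      ∃ j : ℕ, ∃ h : i ≤ j ∧ j + 1 < k, p = fm ⟨j, by omega⟩ ⟨j + 1, by omega⟩} ≤ P := by
    rw [Ideal.span_le]
    rintro _ ⟨j, ⟨-, hj⟩, rfl⟩
    exact hP.1.2 (Ideal.subset_span (Or.inr ⟨j, hj, rfl⟩))
  obtain ⟨Q, hQ, hQP⟩ := Ideal.exists_minimalPrimes_le hFP
  refine ⟨Q, hQ, ?_⟩
  let s : Set (Fin n ⊕ Fin n) :=
    {w | ∃ j : ℕ, ∃ h : j < i, w = Sum.inr ⟨j, by omega⟩} ∪ {Sum.inl ⟨i - 1, by omega⟩}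
  have hs : X '' s = ({p | ∃ j : ℕ, ∃ h : j < i, p = yy (K := K) ⟨j, by omega⟩} ∪
      {xx ⟨i - 1, by omega⟩}) := by
    ext p
    simp [s, xx, yy, eq_comm]
  rw [← hs]
  refine eq_span_X_image_sup_of_mem_minimalPrimes s hP hQ.1.1 hQP ?_ ?_
  · rw [hs]
    rintro _ (⟨j, hj, rfl⟩ | rfl)
    exacts [hy j hj, hx]
  · rw [Ideal.span_le]
    rintro _ (rfl | ⟨j, hj, rfl⟩)
    · simp [s, yy, show 0 < i by omega]
    by_cases hij : i ≤ j
    · simpa [s, fm, xx, yy, show ¬ j < i by omega, show ¬ j + 1 < i by omega,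
        show j ≠ i - 1 by omega, show j + 1 ≠ i - 1 by omega]
        using hQ.1.2 (Ideal.subset_span ⟨j, ⟨hij, hj⟩, rfl⟩)
    · rcases (show j + 1 < i ∨ j + 1 = i by omega) with hji | rfl
      · simp [s, fm, xx, yy, hji, show j < i by omega]
      · simp [s, fm, xx, yy]

end

/-- Indices are 0-based: `yy ⟨0, _⟩` is `y₁` and `fm ⟨j, _⟩ ⟨j + 1, _⟩` is `f_{j+1,j+2}`. -/
theorem minimalPrimes_structure {K : Type*} [Field K] {n k : ℕ} (hk : 2 ≤ k) (hkn : k ≤ n)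
    (P : Ideal (MvPolynomial (Fin n ⊕ Fin n) K))
    (hP : P ∈ (Ideal.span ({yy (K := K) (n := n) ⟨0, by omega⟩} ∪
      {p | ∃ i : ℕ, ∃ h : i + 1 < k, p = fm ⟨i, by omega⟩ ⟨i + 1, by omega⟩})).minimalPrimes) :
    (P = Ideal.span {p | ∃ i : ℕ, ∃ h : i < k, p = yy ⟨i, by omega⟩} ∨
      ∃ i : ℕ, ∃ hi : 1 ≤ i ∧ i ≤ k - 1,
        ∃ Q ∈ (Ideal.span {p : MvPolynomial (Fin n ⊕ Fin n) K |
            ∃ j : ℕ, ∃ h : i ≤ j ∧ j + 1 < k, p = fm ⟨j, by omega⟩ ⟨j + 1, by omega⟩}).minimalPrimes,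
          P = Ideal.span ({p | ∃ j : ℕ, ∃ h : j < i, p = yy ⟨j, by omega⟩} ∪
            {xx ⟨i - 1, by omega⟩}) ⊔ Q) ∧
    (xx ⟨0, by omega⟩ ∈ P ∨ yy ⟨1, by omega⟩ ∈ P) := by
  let x : ℕ → MvPolynomial (Fin n ⊕ Fin n) K := fun j => if h : j < n then xx ⟨j, h⟩ else 0
  let y : ℕ → MvPolynomial (Fin n ⊕ Fin n) K := fun j => if h : j < n then yy ⟨j, h⟩ else 0
  have hIP := hP.1.2
  have hy0 : y 0 ∈ P := by
    simpa [y, show 0 < n by omega] using hIP (Ideal.subset_span (Or.inl rfl))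
  have hf (j : ℕ) (hj : j + 1 < k) : x j * y (j + 1) - x (j + 1) * y j ∈ P := by
    simpa [x, y, fm, show j + 1 < n by omega, show j < n by omega]
      using hIP (Ideal.subset_span (Or.inr ⟨j, hj, rfl⟩))
  rcases hP.1.1.forall_mem_or_exists_of_sub_mem hy0 hf with hy | ⟨i, hi1, hik, hy, hx⟩
  · have hy' (j : ℕ) (hj : j < k) : yy ⟨j, by omega⟩ ∈ P := by
      simpa [y, show j < n by omega] using hy j hj
    exact ⟨.inl (eq_span_yy_of_mem_minimalPrimes (by omega) hkn hP hy'), .inr (hy' 1 (by omega))⟩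
  · have hy' (j : ℕ) (hj : j < i) : yy ⟨j, by omega⟩ ∈ P := by
      simpa [y, show j < n by omega] using hy j hj
    have hx' : xx ⟨i - 1, by omega⟩ ∈ P := by simpa [x, show i - 1 < n by omega] using hx
    refine ⟨.inr ⟨i, ⟨hi1, by omega⟩,
      exists_eq_span_sup_of_mem_minimalPrimes hkn ⟨hi1, by omega⟩ hP hy' hx'⟩, ?_⟩
    rcases (show i = 1 ∨ 1 < i by omega) with rfl | hi
    · exact .inl hx'
    · exact .inr (hy' 1 hi)
end

section
/- Let R = K[x₁,...,xₙ,y₁,...,yₙ] and let P = (x_s, y_s : s ∈ S) + I₂(X_{[a₁,b₁]}) + ... + I₂(X_{[a_c,b_c]}), where S ⊆ {1,...,n} and [a₁,b₁], ..., [a_c,b_c] are pairwise disjoint intervals in {1,...,n} \ S. Then P is a prime ideal of R. -/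
open MvPolynomial

/-! With `g` assigning each column its block, map `x_v ↦ x_v`, `y_v ↦ x_v t_{g v}` into the
polynomial ring in the `x_v` and one new variable `t_b` per block `b`, killing the columns in
`S`; the minors inside a block go to `0`.
Conversely, modulo the ideal a monomial either vanishes (it involves a column of `S`) or is
straightened, by replacing `x_u y_v` with `x_v y_u` for `u < v` in one block, to a standard
monomial, in which inside every block no `x` stands left of a `y`. Standard monomials have
distinct images: the `y`-exponents of a block are recovered from the `x_v`-degrees and the
`t_b`-degree by filling from the left. Hence the ideal is the kernel of a map to a domain.
Disjoint intervals, together with singleton blocks for the other columns, are such blocks. -/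

open Finset

namespace TwoRowMinors

noncomputable section

variable {ι β : Type*}

lemma exists_eq_add_single {α : Type*} {d : α →₀ ℕ} {w : α} (h : d w ≠ 0) :
    ∃ e, d = e + Finsupp.single w 1 :=
  ⟨d - Finsupp.single w 1,
    (tsub_add_cancel_of_le (Finsupp.single_le_iff.2 (Nat.one_le_iff_ne_zero.2 h))).symm⟩

lemma card_filter_lt_lt [LinearOrder ι] [Fintype ι] {u v : ι} (huv : u < v) :
    #{w | w < u} < #{w | w < v} :=
  card_lt_card ⟨fun w hw => by simpa using (by simpa using hw : w < u).trans huv,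
    fun h => lt_irrefl u (mem_filter.1 (h (by simpa using huv))).2⟩

section Exponents

variable (g : ι → β)

def varImage : ι ⊕ ι → (ι ⊕ β →₀ ℕ)
  | .inl v => Finsupp.single (.inl v) 1
  | .inr v => Finsupp.single (.inl v) 1 + Finsupp.single (.inr (g v)) 1

def monomialImage : (ι ⊕ ι →₀ ℕ) →+ (ι ⊕ β →₀ ℕ) :=
  Finsupp.weight (varImage g)

def IsStandard [LinearOrder ι] (d : ι ⊕ ι →₀ ℕ) : Prop :=
  ∀ u v, u < v → g u = g v → d (.inl u) = 0 ∨ d (.inr v) = 0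

variable [Fintype ι]

lemma monomialImage_apply_inl (d : ι ⊕ ι →₀ ℕ) (v : ι) :
    monomialImage g d (.inl v) = d (.inl v) + d (.inr v) := by
  classical
  simp [monomialImage, Finsupp.weight_eq_sum, varImage, Finsupp.single_apply]

lemma monomialImage_apply_inr [DecidableEq β] (d : ι ⊕ ι →₀ ℕ) (b : β) :
    monomialImage g d (.inr b) = ∑ v with g v = b, d (.inr v) := by
  classical
  simp [monomialImage, Finsupp.weight_eq_sum, varImage, Finsupp.single_apply, Finset.sum_filter]

variable [LinearOrder ι] {g}

lemma apply_inr_le_of_monomialImage_eq {d d' : ι ⊕ ι →₀ ℕ} (hd : IsStandard g d)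
    (h : monomialImage g d = monomialImage g d') {v : ι}
    (hlt : ∀ w < v, d (.inr w) = d' (.inr w)) : d' (.inr v) ≤ d (.inr v) := by
  classical
  -- Otherwise `d` has an `x` at `v`, hence no `y` right of `v` in its block, and then the
  -- block has fewer `y`'s in `d` than in `d'`.
  by_contra! hv
  have hx : d (.inl v) ≠ 0 := by
    have := congr($h (.inl v))
    simp only [monomialImage_apply_inl] at this
    omega
  have hsplit (e : ι ⊕ ι →₀ ℕ) : ∑ w with g w = g v, e (.inr w) =
      ∑ w with g w = g v ∧ w < v, e (.inr w) +
        ∑ w with g w = g v ∧ ¬ w < v, e (.inr w) := by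
    rw [← sum_filter_add_sum_filter_not _ (· < v), filter_filter, filter_filter]
  have hbelow : ∑ w with g w = g v ∧ w < v, d (.inr w) =
      ∑ w with g w = g v ∧ w < v, d' (.inr w) :=
    sum_congr rfl fun w hw => hlt w (mem_filter.1 hw).2.2
  have hd_above : ∑ w with g w = g v ∧ ¬ w < v, d (.inr w) = d (.inr v) := by
    refine sum_eq_single v (fun w hw hwv => ?_) (by simp)
    simp only [mem_filter, mem_univ, true_and, not_lt] at hw
    exact (hd v w (lt_of_le_of_ne hw.2 (Ne.symm hwv)) hw.1.symm).resolve_left hx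
  have hd'_above : d' (.inr v) ≤ ∑ w with g w = g v ∧ ¬ w < v, d' (.inr w) :=
    single_le_sum (f := fun w => d' (.inr w)) (fun _ _ => Nat.zero_le _) (by simp)
  have := congr($h (.inr (g v)))
  rw [monomialImage_apply_inr, monomialImage_apply_inr, hsplit, hsplit d'] at this
  omega

lemma injOn_monomialImage : Set.InjOn (monomialImage g) {d | IsStandard g d} := by
  intro d hd d' hd' h
  have hy (v : ι) : d (.inr v) = d' (.inr v) := by
    induction v using WellFoundedLT.induction with
    | _ v ih =>
      exact le_antisymm (apply_inr_le_of_monomialImage_eq hd' h.symm fun w hw => (ih w hw).symm)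
        (apply_inr_le_of_monomialImage_eq hd h ih)
  refine Finsupp.ext (Sum.rec (fun v => ?_) hy)
  have := congr($h (.inl v))
  simp only [monomialImage_apply_inl, hy v] at this
  omega

end Exponents

variable (R : Type*) [CommRing R]

def minor (u v : ι) : MvPolynomial (ι ⊕ ι) R :=
  X (.inl u) * X (.inr v) - X (.inl v) * X (.inr u)

def blockMinorsIdeal [LinearOrder ι] (S : Set ι) (g : ι → β) :
    Ideal (MvPolynomial (ι ⊕ ι) R) :=
  Ideal.span ({p | ∃ s ∈ S, p = X (.inl s) ∨ p = X (.inr s)} ∪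
    {p | ∃ u v, u < v ∧ g u = g v ∧ p = minor R u v})

open Classical in
def specialization (S : Set ι) (g : ι → β) :
    MvPolynomial (ι ⊕ ι) R →ₐ[R] MvPolynomial (ι ⊕ β) R :=
  aeval fun w => if Sum.elim id id w ∈ S then 0 else monomial (varImage g w) 1

def Avoids (S : Set ι) (d : ι ⊕ ι →₀ ℕ) : Prop :=
  ∀ w ∈ d.support, Sum.elim id id w ∉ S

variable {R} {S : Set ι} {g : ι → β}

lemma specialization_monomial {d : ι ⊕ ι →₀ ℕ} (hd : Avoids S d) (r : R) :
    specialization R S g (monomial d r) = monomial (monomialImage g d) r := by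
  rw [specialization, aeval_monomial, monomialImage, Finsupp.weight_apply,
    monomial_finsupp_sum_index, algebraMap_eq]
  congr 1
  refine Finsupp.prod_congr fun w hw => ?_
  rw [if_neg (hd w hw), monomial_pow, one_pow]

section Order

variable [LinearOrder ι]

lemma minor_mem {u v : ι} (huv : u < v) (hg : g u = g v) :
    minor R u v ∈ blockMinorsIdeal R S g :=
  Ideal.subset_span (.inr ⟨u, v, huv, hg, rfl⟩)

lemma monomial_mem_of_not_avoids {d : ι ⊕ ι →₀ ℕ} (hd : ¬ Avoids S d) (r : R) :
    monomial d r ∈ blockMinorsIdeal R S g := by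
  simp only [Avoids, not_forall, not_not] at hd
  obtain ⟨w, hw, hwS⟩ := hd
  refine Ideal.mem_of_dvd _ (X_dvd_monomial.2 (.inr (Finsupp.mem_support_iff.1 hw)))
    (Ideal.subset_span (.inl ⟨_, hwS, ?_⟩))
  rcases w with v | v
  · exact .inl rfl
  · exact .inr rfl

lemma blockMinorsIdeal_le_ker : blockMinorsIdeal R S g ≤ RingHom.ker (specialization R S g) := by
  rw [blockMinorsIdeal, Ideal.span_le]
  rintro _ (⟨s, hs, rfl | rfl⟩ | ⟨u, v, -, hg, rfl⟩) <;>
    simp only [SetLike.mem_coe, RingHom.mem_ker, specialization, minor, map_sub, map_mul, aeval_X]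
  · simp [hs]
  · simp [hs]
  · by_cases hu : u ∈ S <;> by_cases hv : v ∈ S <;>
      simp [hu, hv, varImage, hg, add_left_comm]

lemma monomial_swap_sub_mem {u v : ι} (huv : u < v) (hg : g u = g v) (e : ι ⊕ ι →₀ ℕ) :
    monomial (e + Finsupp.single (.inl u) 1 + Finsupp.single (.inr v) 1) (1 : R) -
      monomial (e + Finsupp.single (.inl v) 1 + Finsupp.single (.inr u) 1) 1 ∈
        blockMinorsIdeal R S g := by
  have : monomial (e + Finsupp.single (.inl u) 1 + Finsupp.single (.inr v) 1) (1 : R) -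
      monomial (e + Finsupp.single (.inl v) 1 + Finsupp.single (.inr u) 1) 1 =
        monomial e 1 * minor R u v := by
    simp only [minor, X, mul_sub, monomial_mul, mul_one, add_assoc]
  rw [this]
  exact Ideal.mul_mem_left _ _ (minor_mem huv hg)

variable [Fintype ι]

def yWeight : (ι ⊕ ι →₀ ℕ) →+ ℕ := Finsupp.weight (Sum.elim 0 fun v => #{w | w < v})

theorem monomial_mem_or_exists_sub_mem (d : ι ⊕ ι →₀ ℕ) :
    monomial d (1 : R) ∈ blockMinorsIdeal R S g ∨ ∃ d', Avoids S d' ∧ IsStandard g d' ∧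
      monomial d (1 : R) - monomial d' 1 ∈ blockMinorsIdeal R S g := by
  induction d using (measure (yWeight (ι := ι))).wf.induction with
  | _ d ih => ?_
  by_cases hS : Avoids S d
  swap
  · exact .inl (monomial_mem_of_not_avoids hS 1)
  by_cases hst : IsStandard g d
  · exact .inr ⟨d, hS, hst, by simp⟩
  simp only [IsStandard, not_forall, not_or] at hst
  obtain ⟨u, v, huv, hg, hu, hv⟩ := hst
  obtain ⟨e₁, rfl⟩ := exists_eq_add_single hv
  obtain ⟨e, rfl⟩ := exists_eq_add_single (w := Sum.inl u) (by simpa using hu)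
  have hswap := monomial_swap_sub_mem (R := R) (S := S) huv hg e
  have : yWeight (e + Finsupp.single (.inl v) 1 + Finsupp.single (.inr u) 1) <
      yWeight (e + Finsupp.single (.inl u) 1 + Finsupp.single (.inr v) 1) := by
    simpa [yWeight, Finsupp.weight_single] using card_filter_lt_lt huv
  rcases ih _ this with h | ⟨d', hd', hst', h⟩
  · exact .inl (by simpa using add_mem hswap h)
  · exact .inr ⟨d', hd', hst', by simpa using add_mem hswap h⟩

theorem exists_sub_mem_restrictSupport (p : MvPolynomial (ι ⊕ ι) R) :
    ∃ q ∈ restrictSupport R {d | Avoids S d ∧ IsStandard g d},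
      p - q ∈ blockMinorsIdeal R S g := by
  induction p using MvPolynomial.induction_on' with
  | monomial d r =>
    rcases monomial_mem_or_exists_sub_mem (R := R) (S := S) (g := g) d with
      h | ⟨d', hd', hst', h⟩
    · refine ⟨0, zero_mem _, ?_⟩
      simpa [C_mul_monomial] using Ideal.mul_mem_left _ (C r) h
    · refine ⟨monomial d' r, by simp [hd', hst'], ?_⟩
      simpa [mul_sub, C_mul_monomial] using Ideal.mul_mem_left _ (C r) h
  | add p p' hp hp' =>
    obtain ⟨q, hq, hpq⟩ := hp
    obtain ⟨q', hq', hpq'⟩ := hp'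
    exact ⟨q + q', add_mem hq hq', by simpa [add_sub_add_comm] using add_mem hpq hpq'⟩

theorem eq_zero_of_specialization_eq_zero {q : MvPolynomial (ι ⊕ ι) R}
    (hq : q ∈ restrictSupport R {d | Avoids S d ∧ IsStandard g d})
    (h : specialization R S g q = 0) : q = 0 := by
  classical
  ext d
  by_contra hne
  have hd := hq (mem_support_iff.2 hne)
  have hsum : specialization R S g q =
      ∑ d ∈ q.support, monomial (monomialImage g d) (coeff d q) := by
    conv_lhs => rw [q.as_sum, map_sum]
    exact sum_congr rfl fun d' hd' => specialization_monomial (hq hd').1 _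
  have : coeff (monomialImage g d) (specialization R S g q) = coeff d q := by
    rw [hsum, coeff_sum, sum_eq_single d _ (by simp_all)]
    · simp
    intro d' hd' hne'
    rw [coeff_monomial, if_neg]
    exact fun h => hne' (injOn_monomialImage (hq hd').2 hd.2 h)
  simp_all

theorem ker_specialization : RingHom.ker (specialization R S g) = blockMinorsIdeal R S g := by
  refine le_antisymm (fun p hp => ?_) blockMinorsIdeal_le_ker
  obtain ⟨q, hq, hpq⟩ := exists_sub_mem_restrictSupport (S := S) (g := g) p
  have : specialization R S g q = 0 := by
    simpa [RingHom.mem_ker.1 hp] using blockMinorsIdeal_le_ker hpq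
  simpa [eq_zero_of_specialization_eq_zero hq this] using hpq

theorem blockMinorsIdeal_isPrime [IsDomain R] : (blockMinorsIdeal R S g).IsPrime :=
  ker_specialization (R := R) (S := S) (g := g) ▸ RingHom.ker_isPrime _

end Order

section Intervals

variable {n c : ℕ}

def intervalBlock (a b : Fin c → Fin n) (v : Fin n) : Fin c ⊕ Fin n :=
  if h : ∃ i, a i ≤ v ∧ v ≤ b i then .inl h.choose else .inr v

lemma intervalBlock_eq_inl {a b : Fin c → Fin n}
    (hdisj : ∀ i j, i ≠ j → ∀ v : Fin n, ¬ (a i ≤ v ∧ v ≤ b i ∧ a j ≤ v ∧ v ≤ b j))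
    {i : Fin c} {v : Fin n} (hv : a i ≤ v ∧ v ≤ b i) : intervalBlock a b v = .inl i := by
  have h : ∃ i, a i ≤ v ∧ v ≤ b i := ⟨i, hv⟩
  rw [intervalBlock, dif_pos h, Sum.inl.injEq]
  by_contra hne
  exact hdisj _ _ hne v ⟨h.choose_spec.1, h.choose_spec.2, hv⟩

lemma intervalBlock_eq_iff {a b : Fin c → Fin n}
    (hdisj : ∀ i j, i ≠ j → ∀ v : Fin n, ¬ (a i ≤ v ∧ v ≤ b i ∧ a j ≤ v ∧ v ≤ b j))
    {u v : Fin n} (huv : u < v) :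
    intervalBlock a b u = intervalBlock a b v ↔ ∃ i, a i ≤ u ∧ v ≤ b i := by
  constructor
  · intro h
    unfold intervalBlock at h
    split_ifs at h with hu hv
    · exact ⟨hu.choose, hu.choose_spec.1, Sum.inl_injective h ▸ hv.choose_spec.2⟩
    · exact absurd (Sum.inr_injective h) huv.ne
  · rintro ⟨i, hu, hv⟩
    rw [intervalBlock_eq_inl hdisj ⟨hu, huv.le.trans hv⟩,
      intervalBlock_eq_inl hdisj ⟨hu.trans huv.le, hv⟩]

end Intervals

end

end TwoRowMinors

open TwoRowMinors in
theorem span_isPrime_general {K : Type*} [Field K] {n : ℕ} (S : Set (Fin n)) (c : ℕ)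
    (a b : Fin c → Fin n)
    (hdisj : ∀ i j, i ≠ j → ∀ v : Fin n, ¬ (a i ≤ v ∧ v ≤ b i ∧ a j ≤ v ∧ v ≤ b j)) :
    (Ideal.span
      (({p | ∃ s ∈ S, p = xx s ∨ p = yy s} ∪
        {p | ∃ i, ∃ u v : Fin n, a i ≤ u ∧ u < v ∧ v ≤ b i ∧ p = fm u v}) :
        Set (MvPolynomial (Fin n ⊕ Fin n) K))).IsPrime := by
  have hminors : {p | ∃ i, ∃ u v : Fin n, a i ≤ u ∧ u < v ∧ v ≤ b i ∧ p = fm u v} =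
      {p : MvPolynomial (Fin n ⊕ Fin n) K |
        ∃ u v, u < v ∧ intervalBlock a b u = intervalBlock a b v ∧ p = minor K u v} := by
    ext p
    constructor
    · rintro ⟨i, u, v, hu, huv, hv, rfl⟩
      exact ⟨u, v, huv, (intervalBlock_eq_iff hdisj huv).2 ⟨i, hu, hv⟩, rfl⟩
    · rintro ⟨u, v, huv, hg, rfl⟩
      obtain ⟨i, hu, hv⟩ := (intervalBlock_eq_iff hdisj huv).1 hg
      exact ⟨i, u, v, hu, huv, hv, rfl⟩
  rw [hminors]
  exact blockMinorsIdeal_isPrime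

/-- Let `P = (x_s, y_s : s ∈ S) + I₂(X_{[a₁,b₁]}) + ... + I₂(X_{[a_c,b_c]})`, where the
intervals `[aᵢ,bᵢ]` are pairwise disjoint and contained in `{1,...,n} ∖ S`. Then `P`
is a prime ideal. -/
theorem span_isPrime {K : Type*} [Field K] {n : ℕ} (S : Set (Fin n)) (c : ℕ)
    (a b : Fin c → Fin n) (hab : ∀ i, a i ≤ b i)
    (hdisj : ∀ i j, i ≠ j → ∀ v : Fin n, ¬ (a i ≤ v ∧ v ≤ b i ∧ a j ≤ v ∧ v ≤ b j))
    (hS : ∀ i, ∀ v : Fin n, a i ≤ v → v ≤ b i → v ∉ S) :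
    (Ideal.span
      (({p | ∃ s ∈ S, p = xx s ∨ p = yy s} ∪
        {p | ∃ i, ∃ u v : Fin n, a i ≤ u ∧ u < v ∧ v ≤ b i ∧ p = fm u v}) :
        Set (MvPolynomial (Fin n ⊕ Fin n) K))).IsPrime :=
  span_isPrime_general S c a b hdisj
end
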